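/- For Λ = exp(n)·exp(a)·Π₀ where Π₀ = [I; I; 0] is a fиducial spacelike p-plane in ℝ^{p,q}, a the diagonal element with λ in the (1,1) slot and λ⁻¹ in the (p+1,p+1) slot, and n the nilpotent element parametrized by B ∈ ℝ^{p+q−2}: the vector B' in the column span of Λ, orthogonal to Λ ∩ w^⊥ and satisfying ⟨B', w⟩ = 1, equals (λ² − ½B²)w + w* + B, where w = e₁, w* is the dual null vector, and B² is the Ξ-norm of B. -/

import Mathlib

open Matrix

/-- The bilinear form of signature `(p, q)` (`q = p + r`) with block matrix
`Ξ = [[0,I_p,0],[I_p,0,0],[0,0,−I_r]]`. -/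
def XiPQ (p r : ℕ) : Matrix (Fin p ⊕ (Fin p ⊕ Fin r)) (Fin p ⊕ (Fin p ⊕ Fin r)) ℝ :=
  Matrix.of fun i j =>
    match i, j with
    | .inl i, .inr (.inl j) => if i = j then (1 : ℝ) else 0
    | .inr (.inl i), .inl j => if i = j then 1 else 0
    | .inr (.inr m), .inr (.inr m') => if m = m' then -1 else 0
    | _, _ => 0

/-- The `Ξ`-pairing on `ℝ^{p,q}`. -/
def xiInner (p r : ℕ) (u v : Fin p ⊕ (Fin p ⊕ Fin r) → ℝ) : ℝ :=
  u ⬝ᵥ (XiPQ p r).mulVec v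

/-- The nilpotent element `n` of `so(p,q)` parametrized by the vector
`B = (C, D, E) ∈ ℝ^{p+q−2}` (with `C 0 = D 0 = 0` as padding). -/
def nilpOfB (p r : ℕ) [NeZero p] (C D : Fin p → ℝ) (E : Fin r → ℝ) :
    Matrix (Fin p ⊕ (Fin p ⊕ Fin r)) (Fin p ⊕ (Fin p ⊕ Fin r)) ℝ :=
  Matrix.of fun i j =>
    match i, j with
    | .inl i, .inl j => if i = 0 then -D j else 0
    | .inl i, .inr (.inl j) => if i = 0 then -C j else if j = 0 then C i else 0
    | .inl i, .inr (.inr m) => if i = 0 then E m else 0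
    | .inr (.inl i), .inr (.inl j) => if j = 0 then D i else 0
    | .inr (.inr m), .inr (.inl j) => if j = 0 then E m else 0
    | _, _ => 0

/-- The fiducial spacelike `p`-plane `Π₀ = [I; I; 0]` (as a `(p+q) × p` matrix). -/
def fidPlane (p r : ℕ) :
    Matrix (Fin p ⊕ (Fin p ⊕ Fin r)) (Fin p) ℝ :=
  Matrix.of fun i j =>
    match i with
    | .inl i' => if i' = j then (1 : ℝ) else 0
    | .inr (.inl i') => if i' = j then 1 else 0
    | .inr (.inr _) => 0

/-- The group element `exp(a)` of `A`: the diagonal matrix with `λ` in the `(1,1)` slot,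
`λ⁻¹` in the `(p+1, p+1)` slot and `1` elsewhere. -/
noncomputable def aDiag (p r : ℕ) [NeZero p] (lam : ℝ) :
    Matrix (Fin p ⊕ (Fin p ⊕ Fin r)) (Fin p ⊕ (Fin p ⊕ Fin r)) ℝ :=
  Matrix.diagonal fun i =>
    if i = Sum.inl 0 then lam else if i = Sum.inr (Sum.inl 0) then lam⁻¹ else 1

/-! The generator `n` is the null rotation `y ↦ ⟨y, w⟩ B - ⟨y, B⟩ w`. It is `Ξ`-skew with
`n³ = 0`, so `exp n = 1 + n + n²/2` is a `Ξ`-isometry fixing `w` and sending `w*` to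
`w* + B - ½B² w`. Since `exp a` is an isometry as well, `⟨Λx, Λy⟩ = 2 x ⬝ y` and
`⟨Λx, w⟩ = λ⁻¹ x₀`; in these coordinates the defining conditions force `B' = Λ(λ e₀)`, which
evaluates to `(λ² − ½B²) w + w* + B`. -/

open Finset NormedSpace
open scoped Nat

theorem NormedSpace.exp_eq_sum_range_of_pow_eq_zero (𝕂 : Type*) {𝔸 : Type*} [Field 𝕂] [CharZero 𝕂]
    [Ring 𝔸] [Algebra 𝕂 𝔸] [TopologicalSpace 𝔸] [IsTopologicalRing 𝔸] {x : 𝔸} {n : ℕ}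
    (hx : x ^ n = 0) : exp x = ∑ k ∈ range n, (k ! : 𝕂)⁻¹ • x ^ k := by
  rw [exp_eq_tsum 𝕂]
  refine tsum_eq_sum fun k hk => ?_
  obtain ⟨j, rfl⟩ := Nat.exists_eq_add_of_le (not_lt.1 (mem_range.not.1 hk))
  rw [pow_add, hx, zero_mul, smul_zero]

section Forms
variable {m ι R : Type*} [Fintype m] [CommRing R]

theorem Matrix.mulVec_dotProduct_mulVec_mulVec [Fintype ι] (M : Matrix m ι R) (J : Matrix m m R)
    (x y : ι → R) : (M *ᵥ x) ⬝ᵥ J *ᵥ (M *ᵥ y) = x ⬝ᵥ (Mᵀ * J * M) *ᵥ y := by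
  rw [← mulVec_mulVec, ← mulVec_mulVec, dotProduct_mulVec x, vecMul_transpose]

theorem Matrix.transpose_exp_mul_mul_exp_of_isSkewAdjoint {𝔸 : Type*} [DecidableEq m]
    [NormedCommRing 𝔸] [NormedAlgebra ℚ 𝔸] [CompleteSpace 𝔸] {J A : Matrix m m 𝔸}
    (hJ : IsUnit J) (hA : J.IsSkewAdjoint A) : (exp A)ᵀ * J * exp A = J := by
  have hAt : Aᵀ = J * -A * J⁻¹ := by
    rw [← hA, mul_nonsing_inv_cancel_right _ _ ((isUnit_iff_isUnit_det J).1 hJ)]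
  rw [← exp_transpose, hAt, exp_conj _ _ hJ, exp_neg,
    nonsing_inv_mul_cancel_right _ _ ((isUnit_iff_isUnit_det J).1 hJ),
    mul_assoc, nonsing_inv_mul _ ((isUnit_iff_isUnit_det _).1 (isUnit_exp A)), mul_one]

end Forms

section NullRotation
variable {m R : Type*} [Fintype m] [CommRing R]

def nullRotation (J : Matrix m m R) (u w : m → R) : Matrix m m R :=
  vecMulVec u (J *ᵥ w) - vecMulVec w (J *ᵥ u)

variable {J : Matrix m m R} {u w : m → R}

theorem nullRotation_mulVec (y : m → R) :
    nullRotation J u w *ᵥ y = (y ⬝ᵥ J *ᵥ w) • u - (y ⬝ᵥ J *ᵥ u) • w := by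
  simp only [nullRotation, sub_mulVec, vecMulVec_mulVec, op_smul_eq_smul, dotProduct_comm (J *ᵥ _)]

theorem isSkewAdjoint_nullRotation (hJ : J.IsSymm) : J.IsSkewAdjoint (nullRotation J u w) := by
  have hJv : ∀ v, J *ᵥ v = v ᵥ* J := fun v => by rw [← vecMul_transpose, hJ.eq]
  simp only [Matrix.IsSkewAdjoint, Matrix.IsAdjointPair, nullRotation, transpose_sub,
    transpose_vecMulVec, sub_mul, mul_neg, mul_sub, vecMulVec_mul, mul_vecMulVec, hJv]
  abel

theorem nullRotation_mulVec_right (hww : w ⬝ᵥ J *ᵥ w = 0) (hwu : w ⬝ᵥ J *ᵥ u = 0) :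
    nullRotation J u w *ᵥ w = 0 := by
  simp [nullRotation_mulVec, hww, hwu]

theorem nullRotation_mulVec_left (huw : u ⬝ᵥ J *ᵥ w = 0) :
    nullRotation J u w *ᵥ u = -(u ⬝ᵥ J *ᵥ u) • w := by
  simp [nullRotation_mulVec, huw, neg_smul]

theorem nullRotation_pow_three [DecidableEq m] (hww : w ⬝ᵥ J *ᵥ w = 0) (hwu : w ⬝ᵥ J *ᵥ u = 0)
    (huw : u ⬝ᵥ J *ᵥ w = 0) : nullRotation J u w ^ 3 = 0 := by
  refine ext_iff_mulVec.2 fun y => ?_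
  rw [pow_three, ← mulVec_mulVec, ← mulVec_mulVec, zero_mulVec, nullRotation_mulVec y,
    mulVec_sub, mulVec_smul, mulVec_smul, nullRotation_mulVec_left huw,
    nullRotation_mulVec_right hww hwu, mulVec_sub, mulVec_smul, mulVec_smul, mulVec_smul,
    nullRotation_mulVec_right hww hwu]
  simp

end NullRotation

section NullRotationExp
variable {m 𝕂 : Type*} [Fintype m] [DecidableEq m] [Field 𝕂] [CharZero 𝕂] [TopologicalSpace 𝕂]
  [IsTopologicalRing 𝕂] {J : Matrix m m 𝕂} {u w : m → 𝕂}

theorem exp_nullRotation (hww : w ⬝ᵥ J *ᵥ w = 0) (hwu : w ⬝ᵥ J *ᵥ u = 0)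
    (huw : u ⬝ᵥ J *ᵥ w = 0) :
    exp (nullRotation J u w) = 1 + nullRotation J u w + (2⁻¹ : 𝕂) • nullRotation J u w ^ 2 := by
  rw [exp_eq_sum_range_of_pow_eq_zero 𝕂 (nullRotation_pow_three hww hwu huw)]
  simp [sum_range_succ]

theorem exp_nullRotation_mulVec_right (hww : w ⬝ᵥ J *ᵥ w = 0) (hwu : w ⬝ᵥ J *ᵥ u = 0)
    (huw : u ⬝ᵥ J *ᵥ w = 0) : exp (nullRotation J u w) *ᵥ w = w := by
  simp [exp_nullRotation hww hwu huw, add_mulVec, smul_mulVec, sq, ← mulVec_mulVec,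
    nullRotation_mulVec_right hww hwu]

theorem exp_nullRotation_mulVec_of_dual (hww : w ⬝ᵥ J *ᵥ w = 0) (hwu : w ⬝ᵥ J *ᵥ u = 0)
    (huw : u ⬝ᵥ J *ᵥ w = 0) {w' : m → 𝕂} (hw'w : w' ⬝ᵥ J *ᵥ w = 1) (hw'u : w' ⬝ᵥ J *ᵥ u = 0) :
    exp (nullRotation J u w) *ᵥ w' = (-(2⁻¹ * (u ⬝ᵥ J *ᵥ u))) • w + w' + u := by
  have hw' : nullRotation J u w *ᵥ w' = u := by simp [nullRotation_mulVec, hw'w, hw'u]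
  simp only [exp_nullRotation hww hwu huw, add_mulVec, smul_mulVec, sq, ← mulVec_mulVec, hw',
    nullRotation_mulVec_left huw, one_mulVec, neg_smul, smul_neg, smul_smul]
  abel

end NullRotationExp

theorem mem_range_orthogonal_iff_eq_mulVec_single {ι m R : Type*} [Fintype ι] [DecidableEq ι]
    [Fintype m] [Field R] {J : Matrix m m R} {Λ : Matrix m ι R} {w : m → R} {i₀ : ι} {k c : R}
    (hk : k ≠ 0) (hc : c ≠ 0)
    (hgram : ∀ x y, (Λ *ᵥ x) ⬝ᵥ J *ᵥ (Λ *ᵥ y) = k * (x ⬝ᵥ y))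
    (hw : ∀ x, (Λ *ᵥ x) ⬝ᵥ J *ᵥ w = c * x i₀) (v : m → R) :
    (v ∈ LinearMap.range Λ.mulVecLin ∧ v ⬝ᵥ J *ᵥ w = 1 ∧
      ∀ u ∈ LinearMap.range Λ.mulVecLin, u ⬝ᵥ J *ᵥ w = 0 → v ⬝ᵥ J *ᵥ u = 0) ↔
    v = Λ *ᵥ Pi.single i₀ c⁻¹ := by
  simp only [LinearMap.mem_range, mulVecLin_apply, forall_exists_index, forall_apply_eq_imp_iff]
  constructor
  · rintro ⟨⟨x, rfl⟩, hx, horth⟩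
    congr 1
    ext j
    rcases eq_or_ne j i₀ with rfl | hj
    · rw [hw] at hx
      simpa using eq_inv_of_mul_eq_one_right hx
    · have hxj := horth (Pi.single j 1) (by rw [hw, Pi.single_eq_of_ne hj.symm, mul_zero])
      rw [hgram, dotProduct_single, mul_one] at hxj
      simpa [hj] using (mul_eq_zero.1 hxj).resolve_left hk
  · rintro rfl
    refine ⟨⟨_, rfl⟩, by rw [hw, Pi.single_eq_same, mul_inv_cancel₀ hc], fun y hy => ?_⟩
    rw [hw] at hy
    rw [hgram, single_dotProduct, (mul_eq_zero.1 hy).resolve_left hc, mul_zero, mul_zero]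

section SignaturePQ
variable {p r : ℕ}

theorem XiPQ_mulVec (x : Fin p ⊕ (Fin p ⊕ Fin r) → ℝ) :
    XiPQ p r *ᵥ x = Sum.elim (fun i => x (.inr (.inl i)))
      (Sum.elim (fun i => x (.inl i)) (fun m => -x (.inr (.inr m)))) := by
  ext (i | i | m) <;> simp [XiPQ, mulVec, dotProduct, Fintype.sum_sum_type]

theorem XiPQ_isSymm : (XiPQ p r).IsSymm := by
  ext (i | i | m) (j | j | m') <;> simp [XiPQ, eq_comm]

theorem XiPQ_mul_self : XiPQ p r * XiPQ p r = 1 :=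
  ext_iff_mulVec.2 fun x => by
    rw [← mulVec_mulVec, XiPQ_mulVec, XiPQ_mulVec, one_mulVec]
    ext (i | i | m) <;> simp

theorem isUnit_XiPQ : IsUnit (XiPQ p r) := IsUnit.of_mul_eq_one _ XiPQ_mul_self

theorem XiPQ_mulVec_single_inl (i : Fin p) :
    XiPQ p r *ᵥ Pi.single (.inl i) 1 = Pi.single (.inr (.inl i)) 1 := by
  rw [XiPQ_mulVec]; ext (j | j | m) <;> simp [Pi.single_apply]

theorem fidPlane_mulVec (x : Fin p → ℝ) :
    fidPlane p r *ᵥ x = Sum.elim x (Sum.elim x 0) := by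
  ext (i | i | m) <;> simp [fidPlane, mulVec, dotProduct]

theorem fidPlane_gram (x y : Fin p → ℝ) :
    (fidPlane p r *ᵥ x) ⬝ᵥ XiPQ p r *ᵥ (fidPlane p r *ᵥ y) = 2 * (x ⬝ᵥ y) := by
  simp only [fidPlane_mulVec, XiPQ_mulVec, dotProduct, Fintype.sum_sum_type]
  simp [two_mul]

variable [NeZero p]

theorem aDiag_transpose_mul_XiPQ_mul {lam : ℝ} (hlam : lam ≠ 0) :
    (aDiag p r lam)ᵀ * XiPQ p r * aDiag p r lam = XiPQ p r := by
  rw [aDiag, diagonal_transpose]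
  ext (i | i | m) (j | j | m') <;> simp [diagonal_mul, mul_diagonal, XiPQ]
  all_goals split_ifs <;> simp_all

theorem nilpOfB_eq_nullRotation {C D : Fin p → ℝ} {E : Fin r → ℝ} (hC : C 0 = 0) :
    nilpOfB p r C D E =
      nullRotation (XiPQ p r) (Sum.elim C (Sum.elim D E)) (Pi.single (.inl 0) 1) := by
  rw [nullRotation, XiPQ_mulVec_single_inl, XiPQ_mulVec]
  ext (i | i | m) (j | j | m') <;> simp [nilpOfB, vecMulVec_apply, Pi.single_apply]
  all_goals split_ifs <;> simp_all

section Plane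
variable {C D : Fin p → ℝ} {E : Fin r → ℝ}

theorem exp_nilpOfB_transpose_mul_XiPQ_mul (hC : C 0 = 0) :
    (exp (nilpOfB p r C D E))ᵀ * XiPQ p r * exp (nilpOfB p r C D E) = XiPQ p r := by
  rw [nilpOfB_eq_nullRotation hC]
  exact transpose_exp_mul_mul_exp_of_isSkewAdjoint isUnit_XiPQ
    (isSkewAdjoint_nullRotation XiPQ_isSymm)

theorem exp_nilpOfB_mulVec (hC : C 0 = 0) (hD : D 0 = 0) :
    exp (nilpOfB p r C D E) *ᵥ Pi.single (.inl 0) 1 = Pi.single (.inl 0) 1 ∧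
    exp (nilpOfB p r C D E) *ᵥ Pi.single (.inr (.inl 0)) 1 =
      (-(2⁻¹ * xiInner p r (Sum.elim C (Sum.elim D E)) (Sum.elim C (Sum.elim D E)))) •
        Pi.single (.inl 0) 1 + Pi.single (.inr (.inl 0)) 1 + Sum.elim C (Sum.elim D E) := by
  rw [nilpOfB_eq_nullRotation hC]
  have hww : Pi.single (.inl 0) 1 ⬝ᵥ XiPQ p r *ᵥ Pi.single (.inl 0) 1 = 0 := by
    rw [XiPQ_mulVec_single_inl]; simp
  have hwB : Pi.single (.inl 0) 1 ⬝ᵥ XiPQ p r *ᵥ Sum.elim C (Sum.elim D E) = 0 := by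
    simp [XiPQ_mulVec, hD]
  have hBw : Sum.elim C (Sum.elim D E) ⬝ᵥ XiPQ p r *ᵥ Pi.single (.inl 0) 1 = 0 := by
    rw [XiPQ_mulVec_single_inl]; simp [hD]
  have hw'w : Pi.single (.inr (.inl 0)) 1 ⬝ᵥ XiPQ p r *ᵥ Pi.single (.inl 0) 1 = 1 := by
    rw [XiPQ_mulVec_single_inl]; simp
  have hw'B : Pi.single (.inr (.inl 0)) 1 ⬝ᵥ XiPQ p r *ᵥ Sum.elim C (Sum.elim D E) = 0 := by
    simp [XiPQ_mulVec, hC]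
  exact ⟨exp_nullRotation_mulVec_right hww hwB hBw,
    exp_nullRotation_mulVec_of_dual hww hwB hBw hw'w hw'B⟩

theorem exp_nilpOfB_mul_aDiag_transpose_mul_XiPQ_mul (hC : C 0 = 0) {lam : ℝ} (hlam : lam ≠ 0) :
    (exp (nilpOfB p r C D E) * aDiag p r lam)ᵀ * XiPQ p r *
      (exp (nilpOfB p r C D E) * aDiag p r lam) = XiPQ p r := by
  calc _ = (aDiag p r lam)ᵀ * ((exp (nilpOfB p r C D E))ᵀ * XiPQ p r *
        exp (nilpOfB p r C D E)) * aDiag p r lam := by simp only [transpose_mul, Matrix.mul_assoc]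
    _ = XiPQ p r := by
      rw [exp_nilpOfB_transpose_mul_XiPQ_mul hC, aDiag_transpose_mul_XiPQ_mul hlam]

theorem exp_nilpOfB_mul_aDiag_mulVec_single_inl (hC : C 0 = 0) (hD : D 0 = 0) (lam : ℝ) :
    (exp (nilpOfB p r C D E) * aDiag p r lam) *ᵥ Pi.single (.inl 0) 1 =
      lam • Pi.single (.inl 0) 1 := by
  rw [← mulVec_mulVec, aDiag, diagonal_mulVec_single, if_pos rfl, ← smul_eq_mul, Pi.single_smul,
    mulVec_smul, (exp_nilpOfB_mulVec hC hD).1]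

theorem plane_mulVec_single_zero (hC : C 0 = 0) (hD : D 0 = 0) {lam : ℝ} (hlam : lam ≠ 0) :
    (exp (nilpOfB p r C D E) * aDiag p r lam * fidPlane p r) *ᵥ Pi.single 0 lam =
      (lam ^ 2 - xiInner p r (Sum.elim C (Sum.elim D E)) (Sum.elim C (Sum.elim D E)) / 2) •
        Pi.single (.inl 0) 1 + Pi.single (.inr (.inl 0)) 1 + Sum.elim C (Sum.elim D E) := by
  have hfid : fidPlane p r *ᵥ Pi.single 0 lam =
      lam • Pi.single (.inl 0) 1 + lam • Pi.single (.inr (.inl 0)) 1 := by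
    rw [fidPlane_mulVec]; ext (i | i | m) <;> simp [Pi.single_apply]
  have ha : aDiag p r lam *ᵥ Pi.single (.inr (.inl 0)) 1 =
      lam⁻¹ • Pi.single (.inr (.inl 0)) 1 := by
    rw [aDiag, diagonal_mulVec_single]; simp [← Pi.single_smul]
  rw [← mulVec_mulVec, hfid, mulVec_add, mulVec_smul, mulVec_smul,
    exp_nilpOfB_mul_aDiag_mulVec_single_inl hC hD, ← mulVec_mulVec, ha, mulVec_smul,
    (exp_nilpOfB_mulVec hC hD).2, smul_smul, smul_smul, mul_inv_cancel₀ hlam]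
  module

theorem plane_gram (hC : C 0 = 0) {lam : ℝ} (hlam : lam ≠ 0) (x y : Fin p → ℝ) :
    ((exp (nilpOfB p r C D E) * aDiag p r lam * fidPlane p r) *ᵥ x) ⬝ᵥ
      XiPQ p r *ᵥ ((exp (nilpOfB p r C D E) * aDiag p r lam * fidPlane p r) *ᵥ y) =
        2 * (x ⬝ᵥ y) := by
  rw [← mulVec_mulVec x, ← mulVec_mulVec y, mulVec_dotProduct_mulVec_mulVec,
    exp_nilpOfB_mul_aDiag_transpose_mul_XiPQ_mul hC hlam, fidPlane_gram]

theorem plane_pairing_single_inl (hC : C 0 = 0) (hD : D 0 = 0) {lam : ℝ} (hlam : lam ≠ 0)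
    (x : Fin p → ℝ) :
    ((exp (nilpOfB p r C D E) * aDiag p r lam * fidPlane p r) *ᵥ x) ⬝ᵥ
      XiPQ p r *ᵥ Pi.single (.inl 0) 1 = lam⁻¹ * x 0 := by
  have hw : Pi.single (.inl 0) 1 = (exp (nilpOfB p r C D E) * aDiag p r lam) *ᵥ
      (lam⁻¹ • Pi.single (.inl 0) 1 : Fin p ⊕ (Fin p ⊕ Fin r) → ℝ) := by
    rw [mulVec_smul, exp_nilpOfB_mul_aDiag_mulVec_single_inl hC hD, smul_smul,
      inv_mul_cancel₀ hlam, one_smul]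
  rw [hw, ← mulVec_mulVec x, mulVec_dotProduct_mulVec_mulVec,
    exp_nilpOfB_mul_aDiag_transpose_mul_XiPQ_mul hC hlam, mulVec_smul, XiPQ_mulVec_single_inl,
    fidPlane_mulVec]
  simp [mul_comm]

end Plane

end SignaturePQ

/-- Let `Λ = exp(n)·exp(a)·Π₀` be the spacelike `p`-plane obtained from
the fiducial plane `Π₀ = [I; I; 0]`.  The vector `B′` in the column span of `Λ`,
`Ξ`-orthogonal to `Λ ∩ w^⊥` and normalized by `⟨B′, w⟩ = 1`, equals
`(λ² − ½B²)·w + w* + B`, where `w = e₁`, `w* = e_{p+1}` and `B²` is the `Ξ`-norm of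
`B`. -/
theorem grassmannian_Bprime (p r : ℕ) [NeZero p]
    (C D : Fin p → ℝ) (E : Fin r → ℝ) (hC : C 0 = 0) (hD : D 0 = 0)
    (lam : ℝ) (hlam : 0 < lam) :
    ∀ plane : Submodule ℝ (Fin p ⊕ (Fin p ⊕ Fin r) → ℝ),
      plane = LinearMap.range
        (Matrix.mulVecLin
          (NormedSpace.exp (nilpOfB p r C D E) * aDiag p r lam * fidPlane p r)) →
    ∀ w wstar Bvec Bprime : Fin p ⊕ (Fin p ⊕ Fin r) → ℝ,
      w = Pi.single (Sum.inl 0) 1 →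
      wstar = Pi.single (Sum.inr (Sum.inl 0)) 1 →
      Bvec = Sum.elim C (Sum.elim D E) →
      Bprime = (lam ^ 2 - xiInner p r Bvec Bvec / 2) • w + wstar + Bvec →
      (Bprime ∈ plane ∧
       xiInner p r Bprime w = 1 ∧
       (∀ u ∈ plane, xiInner p r u w = 0 → xiInner p r Bprime u = 0) ∧
       (∀ v ∈ plane, (∀ u ∈ plane, xiInner p r u w = 0 → xiInner p r v u = 0) →
          xiInner p r v w = 1 → v = Bprime)) := by
  rintro plane rfl w wstar Bvec Bprime rfl rfl rfl rfl
  have hlam' : lam ≠ 0 := hlam.ne'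
  have hchar := mem_range_orthogonal_iff_eq_mulVec_single (i₀ := 0) two_ne_zero
    (inv_ne_zero hlam') (plane_gram (E := E) hC hlam')
    (plane_pairing_single_inl (E := E) hC hD hlam')
  rw [inv_inv, plane_mulVec_single_zero hC hD hlam'] at hchar
  obtain ⟨hmem, hnorm, horth⟩ := (hchar _).2 rfl
  exact ⟨hmem, hnorm, horth, fun v hv hvorth hvw => (hchar v).1 ⟨hv, hvw, hvorth⟩⟩
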